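/- arXiv:1504.00997 — 2 statements merged into one kernel-verified Lean document; each statement's English description precedes it below -/
import Mathlib

section
/- Let n ≥ 4, 2 ≤ j ≤ n−2, and let W be a j-element subset of {1,...,n} with 1 ∈ W. Suppose a is an element of m(W) = {min(X) : X a connected component of C_n[complement of W]} with a ≠ min(m(W)). Then the filling T of the Young diagram of shape (j, 2, 1^{n−j−2}) obtained by placing the elements of W in increasing order in the first row, placing a in position (2,2), and placing the elements of (complement of W) \ {a} in increasing order in the remaining boxes of the first column, is a standard Young tableau. -/
/-!
Since `1 ∈ W`, every element of the complement `S = {1,…,n} \ W` is at least `2`. The minimum of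
`m(W)` is `min S`, so `min S < a`, and since `a` is the least vertex of its component of
`C_n[S]`, its neighbour `a - 1` is not in `S`, i.e. `a - 1 ∈ W`. Rows and columns filled by
increasing enumerations are automatically increasing, so only three corner inequalities remain:
`T(1,1) = 1 < min S = T(2,1)`, `T(2,1) = min S < a = T(2,2)` and `T(1,2) ≤ a - 1 < a = T(2,2)`.
-/

open scoped Classical

noncomputable section

/-- The cycle graph `C_n` on vertex set `{1,...,n}` (as a graph on `ℕ`):
`i ~ j` iff both lie in `{1,...,n}` and `i - j ≡ ±1 (mod n)`. -/
def cycleGraph (n : ℕ) : SimpleGraph ℕ where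
  Adj i j := i ∈ Set.Icc 1 n ∧ j ∈ Set.Icc 1 n ∧ i ≠ j ∧
    ((i + 1) % n = j % n ∨ (j + 1) % n = i % n)
  symm := ⟨fun i j h => ⟨h.2.1, h.1, h.2.2.1.symm, h.2.2.2.symm⟩⟩
  loopless := ⟨fun i h => h.2.2.1 rfl⟩

/-- Number of connected components of the induced subgraph `C_n[W]`. -/
def numComponents (n : ℕ) (W : Set ℕ) : ℕ :=
  Nat.card ((cycleGraph n).induce W).ConnectedComponent

/-- The set of minima of the connected components of `C_n[W]`. -/
def compMins (n : ℕ) (W : Set ℕ) : Set ℕ :=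
  {a | ∃ ha : a ∈ W, ∀ b, ∀ hb : b ∈ W,
    ((cycleGraph n).induce W).Reachable ⟨a, ha⟩ ⟨b, hb⟩ → a ≤ b}

/-- `m(W)`: component minima of `C_n[complement of W]` if `1 ∈ W`,
of `C_n[W]` otherwise. -/
def mSet (n : ℕ) (W : Set ℕ) : Set ℕ :=
  if 1 ∈ W then compMins n (Set.Icc 1 n \ W) else compMins n W

/-- The cells of the Young diagram of shape `(j, 2, 1^{n-j-2})`, 0-indexed:
row `0` has `j` boxes, row `1` has `2` boxes, rows `2,...,n-j-1` have one box. -/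
def cell (n j : ℕ) (p : ℕ × ℕ) : Prop :=
  (p.1 = 0 ∧ p.2 < j) ∨ (p.1 = 1 ∧ p.2 < 2) ∨ (2 ≤ p.1 ∧ p.1 < n - j ∧ p.2 = 0)

/-- `T` is a standard Young tableau of shape `(j, 2, 1^{n-j-2})`:
zero outside the diagram, a bijection from the cells onto `{1,...,n}`,
strictly increasing along rows and columns. -/
def IsSYT (n j : ℕ) (T : ℕ × ℕ → ℕ) : Prop :=
  (∀ p, ¬ cell n j p → T p = 0) ∧
  Set.BijOn T {p | cell n j p} (Set.Icc 1 n) ∧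
  (∀ p q : ℕ × ℕ, cell n j p → cell n j q → p.1 = q.1 → p.2 < q.2 → T p < T q) ∧
  (∀ p q : ℕ × ℕ, cell n j p → cell n j q → p.2 = q.2 → p.1 < q.1 → T p < T q)

/-- `a_T = T(2,2)` (0-indexed: the entry at position `(1,1)`). -/
def aT (T : ℕ × ℕ → ℕ) : ℕ := T (1, 1)

/-- `W_T`: the set of first-row entries of `T` if `a_T - 1` lies in the first row,
and `{T(2,2)} ∪ {T(1,i) : 2 ≤ i ≤ j}` if `a_T - 1` lies in the first column. -/
def WT (j : ℕ) (T : ℕ × ℕ → ℕ) : Set ℕ :=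
  if ∃ c < j, T (0, c) = T (1, 1) - 1 then T '' {p : ℕ × ℕ | p.1 = 0 ∧ p.2 < j}
  else {T (1, 1)} ∪ T '' {p : ℕ × ℕ | p.1 = 0 ∧ 1 ≤ p.2 ∧ p.2 < j}

/-- The filling with the elements of `W` in increasing order in the first row,
`a` at position `(2,2)`, and the elements of `({1,...,n} \ W) \ {a}` in increasing
order in the remaining boxes of the first column. -/
def fillRow (n j : ℕ) (W : Set ℕ) (a : ℕ) : ℕ × ℕ → ℕ := fun p =>
  if p.1 = 0 ∧ p.2 < j then Nat.nth (· ∈ W) p.2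
  else if p = (1, 1) then a
  else if p.2 = 0 ∧ 1 ≤ p.1 ∧ p.1 < n - j then
    Nat.nth (· ∈ (Set.Icc 1 n \ W) \ {a}) (p.1 - 1)
  else 0

/-- The filling with the elements of `{1,...,n} \ W` in increasing order in the
first column, `a` at position `(2,2)`, and the elements of `W \ {a}` in increasing
order in the remaining boxes of the first row. -/
def fillCol (n j : ℕ) (W : Set ℕ) (a : ℕ) : ℕ × ℕ → ℕ := fun p =>
  if p.2 = 0 ∧ p.1 < n - j then Nat.nth (· ∈ Set.Icc 1 n \ W) p.1
  else if p = (1, 1) then a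
  else if p.1 = 0 ∧ 1 ≤ p.2 ∧ p.2 < j then Nat.nth (· ∈ W \ {a}) (p.2 - 1)
  else 0

/-- `S(j,n)`: pairs `(W, a)` with `W` a `j`-subset of `{1,...,n}` and `a` a
non-minimal element of `m(W)`. -/
def SpairSet (n j : ℕ) : Set (Set ℕ × ℕ) :=
  {p | p.1 ⊆ Set.Icc 1 n ∧ p.1.ncard = j ∧ p.2 ∈ mSet n p.1 ∧ p.2 ≠ sInf (mSet n p.1)}

end

theorem Nat.bijOn_nth_Iio_ncard {s : Set ℕ} (hs : s.Finite) :
    Set.BijOn (Nat.nth (· ∈ s)) (Set.Iio s.ncard) s := by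
  rw [Set.ncard_eq_toFinset_card s hs]
  exact ⟨fun k hk => Nat.nth_mem_of_lt_card hs hk, Nat.nth_injOn hs,
    (Nat.image_nth_Iio_card hs).symm.subset⟩

theorem Nat.strictMonoOn_nth_Iio_ncard {s : Set ℕ} (hs : s.Finite) :
    StrictMonoOn (Nat.nth (· ∈ s)) (Set.Iio s.ncard) := by
  rw [Set.ncard_eq_toFinset_card s hs]
  exact Nat.nth_strictMonoOn hs

theorem Nat.nth_one_le_of_lt {s : Set ℕ} {x y : ℕ} (hx : x ∈ s) (hy : y ∈ s) (hxy : x < y) :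
    Nat.nth (· ∈ s) 1 ≤ y := by
  by_contra! h
  have h0 : Nat.nth (· ∈ s) 0 ≤ x := by rw [Nat.nth_zero]; exact Nat.sInf_le hx
  have := Nat.le_nth_of_lt_nth_succ h hy
  omega

theorem Set.BijOn.union_of_disjoint {α β : Type*} {f : α → β} {s₁ s₂ : Set α} {t₁ t₂ : Set β}
    (h₁ : Set.BijOn f s₁ t₁) (h₂ : Set.BijOn f s₂ t₂) (ht : Disjoint t₁ t₂) :
    Set.BijOn f (s₁ ∪ s₂) (t₁ ∪ t₂) := by
  refine h₁.union h₂ ?_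
  rintro x (hx | hx) y (hy | hy) hxy
  exacts [h₁.injOn hx hy hxy, (ht.ne_of_mem (h₁.mapsTo hx) (h₂.mapsTo hy) hxy).elim,
    (ht.ne_of_mem (h₁.mapsTo hy) (h₂.mapsTo hx) hxy.symm).elim, h₂.injOn hx hy hxy]

theorem cycleGraph_adj_sub_one {n a : ℕ} (ha : 2 ≤ a) (han : a ≤ n) :
    (cycleGraph n).Adj a (a - 1) :=
  ⟨⟨by omega, han⟩, ⟨by omega, by omega⟩, by omega, Or.inr (by rw [Nat.sub_add_cancel (by omega)])⟩

theorem compMins_subset (n : ℕ) (S : Set ℕ) : compMins n S ⊆ S :=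
  fun _ ⟨ha, _⟩ => ha

theorem sInf_compMins (n : ℕ) (S : Set ℕ) : sInf (compMins n S) = sInf S := by
  rcases S.eq_empty_or_nonempty with rfl | hS
  · rw [Set.subset_empty_iff.1 (compMins_subset n ∅)]
  have hmin : sInf S ∈ compMins n S := ⟨Nat.sInf_mem hS, fun b hb _ => Nat.sInf_le hb⟩
  exact le_antisymm (Nat.sInf_le hmin)
    (Nat.sInf_le (compMins_subset n S (Nat.sInf_mem ⟨_, hmin⟩)))

theorem sub_one_notMem_of_mem_compMins {n a : ℕ} {S : Set ℕ} (hS : S ⊆ Set.Icc 1 n)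
    (ha : a ∈ compMins n S) (ha2 : 2 ≤ a) : a - 1 ∉ S := by
  obtain ⟨haS, hmin⟩ := ha
  intro hS'
  have hadj : ((cycleGraph n).induce S).Adj ⟨a, haS⟩ ⟨a - 1, hS'⟩ :=
    cycleGraph_adj_sub_one ha2 (hS haS).2
  have := hmin (a - 1) hS' hadj.reachable
  omega

section fillRow

variable {n j : ℕ} {W : Set ℕ} {a : ℕ}

theorem fillRow_row {c : ℕ} (hc : c < j) : fillRow n j W a (0, c) = Nat.nth (· ∈ W) c := by
  simp [fillRow, hc]

theorem fillRow_corner : fillRow n j W a (1, 1) = a := by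
  simp [fillRow]

theorem fillRow_col {k : ℕ} (hk : k + 1 < n - j) :
    fillRow n j W a (k + 1, 0) = Nat.nth (· ∈ (Set.Icc 1 n \ W) \ {a}) k := by
  simp [fillRow, hk]

theorem fillRow_eq_zero_of_not_cell {p : ℕ × ℕ} (hp : ¬ cell n j p) : fillRow n j W a p = 0 := by
  obtain ⟨r, c⟩ := p
  simp only [cell, not_or, not_and] at hp
  simp only [fillRow, Prod.mk.injEq]
  split_ifs <;> omega

theorem cell_iff (hnj : j + 2 ≤ n) {p : ℕ × ℕ} :
    cell n j p ↔ (∃ c < j, p = (0, c)) ∨ p = (1, 1) ∨ ∃ k, k + 1 < n - j ∧ p = (k + 1, 0) := by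
  obtain ⟨r, c⟩ := p
  simp only [cell, Prod.mk.injEq]
  constructor
  · rintro (⟨rfl, hc⟩ | ⟨rfl, hc⟩ | ⟨hr, hrn, rfl⟩)
    · exact Or.inl ⟨c, hc, rfl, rfl⟩
    · interval_cases c
      · exact Or.inr (Or.inr ⟨0, by omega, rfl, rfl⟩)
      · exact Or.inr (Or.inl ⟨rfl, rfl⟩)
    · exact Or.inr (Or.inr ⟨r - 1, by omega, by omega, rfl⟩)
  · rintro (⟨c, hc, rfl, rfl⟩ | ⟨rfl, rfl⟩ | ⟨k, hk, rfl, rfl⟩) <;> omega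

theorem setOf_cell (hnj : j + 2 ≤ n) :
    {p | cell n j p} =
      Prod.mk 0 '' Set.Iio j ∪ insert (1, 1) ((fun k => (k + 1, 0)) '' Set.Iio (n - j - 1)) := by
  ext p
  simp only [Set.mem_ofPred_eq, cell_iff hnj, Set.mem_union, Set.mem_insert_iff, Set.mem_image,
    Set.mem_Iio]
  refine or_congr ⟨fun ⟨c, hc, hp⟩ => ⟨c, hc, hp.symm⟩, fun ⟨c, hc, hp⟩ => ⟨c, hc, hp.symm⟩⟩
    (or_congr Iff.rfl ⟨fun ⟨k, hk, hp⟩ => ⟨k, by omega, hp.symm⟩,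
      fun ⟨k, hk, hp⟩ => ⟨k, by omega, hp.symm⟩⟩)

theorem ncard_Icc_diff_diff_singleton (hW : W ⊆ Set.Icc 1 n) (hcard : W.ncard = j)
    (ha : a ∈ Set.Icc 1 n \ W) : ((Set.Icc 1 n \ W) \ {a}).ncard = n - j - 1 := by
  rw [Set.ncard_sdiff_singleton_of_mem ha, Set.ncard_sdiff hW ((Set.finite_Icc 1 n).subset hW),
    hcard, Set.ncard_Icc_nat, Nat.add_sub_cancel]

theorem bijOn_fillRow (hnj : j + 2 ≤ n) (hW : W ⊆ Set.Icc 1 n) (hcard : W.ncard = j)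
    (ha : a ∈ Set.Icc 1 n \ W) :
    Set.BijOn (fillRow n j W a) {p | cell n j p} (Set.Icc 1 n) := by
  set A := (Set.Icc 1 n \ W) \ {a}
  have hWfin : W.Finite := (Set.finite_Icc 1 n).subset hW
  have hAfin : A.Finite := (Set.finite_Icc 1 n).sdiff.sdiff
  have hAcard : A.ncard = n - j - 1 := ncard_Icc_diff_diff_singleton hW hcard ha
  have hrow : Set.BijOn (fillRow n j W a) (Prod.mk 0 '' Set.Iio j) W := by
    rw [← Set.bijOn_comp_iff (Prod.mk_right_injective 0).injOn]
    exact (hcard ▸ Nat.bijOn_nth_Iio_ncard hWfin).congr fun c hc => (fillRow_row hc).symm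
  have hcol : Set.BijOn (fillRow n j W a) ((fun k => (k + 1, 0)) '' Set.Iio (n - j - 1)) A := by
    rw [← Set.bijOn_comp_iff (fun k _ l _ h => by simpa using h)]
    refine (hAcard ▸ Nat.bijOn_nth_Iio_ncard hAfin).congr fun k hk => ?_
    exact (fillRow_col (by simp only [Set.mem_Iio] at hk; omega)).symm
  have hcorner := hcol.insert (a := (1, 1)) (by rw [fillRow_corner]; exact fun h => h.2 rfl)
  rw [fillRow_corner, Set.insert_sdiff_singleton, Set.insert_eq_of_mem ha] at hcorner
  rw [setOf_cell hnj, ← Set.union_sdiff_cancel hW]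
  exact hrow.union_of_disjoint hcorner Set.disjoint_sdiff_right

theorem isSYT_fillRow (hnj : j + 2 ≤ n) (hW : W ⊆ Set.Icc 1 n) (hcard : W.ncard = j)
    (ha : a ∈ Set.Icc 1 n \ W)
    (hcol₀ : Nat.nth (· ∈ W) 0 < Nat.nth (· ∈ (Set.Icc 1 n \ W) \ {a}) 0)
    (hrow₁ : Nat.nth (· ∈ (Set.Icc 1 n \ W) \ {a}) 0 < a)
    (hcol₁ : Nat.nth (· ∈ W) 1 < a) :
    IsSYT n j (fillRow n j W a) := by
  have hW_mono : StrictMonoOn (Nat.nth (· ∈ W)) (Set.Iio j) :=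
    hcard ▸ Nat.strictMonoOn_nth_Iio_ncard ((Set.finite_Icc 1 n).subset hW)
  have hA_mono : StrictMonoOn (Nat.nth (· ∈ (Set.Icc 1 n \ W) \ {a})) (Set.Iio (n - j - 1)) :=
    ncard_Icc_diff_diff_singleton hW hcard ha ▸
      Nat.strictMonoOn_nth_Iio_ncard (Set.finite_Icc 1 n).sdiff.sdiff
  have hA_mem {k : ℕ} (hk : k + 1 < n - j) : k ∈ Set.Iio (n - j - 1) := by
    rw [Set.mem_Iio]; omega
  refine ⟨fun p => fillRow_eq_zero_of_not_cell, bijOn_fillRow hnj hW hcard ha, ?_, ?_⟩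
  · intro p q hp hq hrow hlt
    rcases (cell_iff hnj).1 hp with ⟨c, hc, rfl⟩ | rfl | ⟨k, hk, rfl⟩ <;>
    rcases (cell_iff hnj).1 hq with ⟨c', hc', rfl⟩ | rfl | ⟨k', hk', rfl⟩ <;>
    simp only [fillRow_row, fillRow_corner, fillRow_col, *] at hrow hlt ⊢
    all_goals first
      | omega
      | exact hW_mono hc hc' hlt
      | obtain rfl : k = 0 := by omega
        exact hrow₁
  · intro p q hp hq hcol hlt
    rcases (cell_iff hnj).1 hp with ⟨c, hc, rfl⟩ | rfl | ⟨k, hk, rfl⟩ <;>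
    rcases (cell_iff hnj).1 hq with ⟨c', hc', rfl⟩ | rfl | ⟨k', hk', rfl⟩ <;>
    simp only [fillRow_row, fillRow_corner, fillRow_col, *] at hcol hlt ⊢
    all_goals first
      | omega
      | subst hcol
        first
          | exact hcol₁
          | exact hcol₀.trans_le (hA_mono.monotoneOn (hA_mem (by omega)) (hA_mem hk') k'.zero_le)
      | exact hA_mono (hA_mem hk) (hA_mem hk') (by omega)

end fillRow

theorem stmt_2_general (n j : ℕ) (hj1 : 2 ≤ j) (hj2 : j ≤ n - 2)
    (W : Set ℕ) (hW : W ⊆ Set.Icc 1 n) (hcard : W.ncard = j) (h1 : 1 ∈ W)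
    (a : ℕ) (ha : a ∈ compMins n (Set.Icc 1 n \ W))
    (hmin : a ≠ sInf (compMins n (Set.Icc 1 n \ W))) :
    IsSYT n j (fillRow n j W a) := by
  set S := Set.Icc 1 n \ W
  have haS : a ∈ S := compMins_subset n S ha
  have hmS : sInf S ∈ S \ {a} :=
    ⟨Nat.sInf_mem ⟨a, haS⟩, by rw [sInf_compMins] at hmin; exact hmin.symm⟩
  have two_le_of_mem {x : ℕ} (hx : x ∈ S) : 2 ≤ x := by
    have : x ≠ 1 := fun h => hx.2 (h ▸ h1)
    have := hx.1.1
    omega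
  have hma : sInf S < a := lt_of_le_of_ne (Nat.sInf_le haS) hmS.2
  have ha2 := two_le_of_mem haS
  have ha1 : a - 1 ∈ W := by
    by_contra h
    exact sub_one_notMem_of_mem_compMins Set.sdiff_subset ha ha2
      ⟨⟨by omega, (Nat.sub_le a 1).trans haS.1.2⟩, h⟩
  have hA0 : Nat.nth (· ∈ S \ {a}) 0 ∈ S \ {a} := by rw [Nat.nth_zero]; exact Nat.sInf_mem ⟨_, hmS⟩
  have hW0 : Nat.nth (· ∈ W) 0 ≤ 1 := by rw [Nat.nth_zero]; exact Nat.sInf_le h1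
  refine isSYT_fillRow (by omega) hW hcard haS ?_ ?_ ?_
  · exact hW0.trans_lt (two_le_of_mem hA0.1)
  · rw [Nat.nth_zero]; exact (Nat.sInf_le hmS).trans_lt hma
  · have hm2 := two_le_of_mem hmS.1
    exact (Nat.nth_one_le_of_lt h1 ha1 (by omega)).trans_lt (by omega)

/-- when `1 ∈ W` and `a` is a non-minimal component minimum of the
complement, the filling `fillRow` is a standard Young tableau. -/
theorem stmt_2 (n j : ℕ) (hn : 4 ≤ n) (hj1 : 2 ≤ j) (hj2 : j ≤ n - 2)
    (W : Set ℕ) (hW : W ⊆ Set.Icc 1 n) (hcard : W.ncard = j) (h1 : 1 ∈ W)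
    (a : ℕ) (ha : a ∈ compMins n (Set.Icc 1 n \ W))
    (hmin : a ≠ sInf (compMins n (Set.Icc 1 n \ W))) :
    IsSYT n j (fillRow n j W a) :=
  stmt_2_general n j hj1 hj2 W hW hcard h1 a ha hmin
end

section
/- Let n ≥ 4 and 2 ≤ j ≤ n−2, and let T be a standard Young tableau of shape (j, 2, 1^{n−j−2}) with entries 1,...,n. Let a = T(2,2) and let B be the box of T containing a−1. If B lies in the first row of T, then 1 ∈ W_T := {T(1,i) : 1 ≤ i ≤ j}, a ∉ W_T, and a is a non-minimal element of the set of minima of the connected components of C_n restricted to the complement of W_T. -/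
open scoped Classical

/-
The entry `1` sits at `T(1,1)`, so `1 ∈ W_T`, while `a = T(2,2)` and `T(2,1) < a` lie outside the
first row. In `C_n` restricted to the complement of `W_T`, neither `1` nor `a - 1` is a vertex, so
no edge leaves `{x ≥ a}` (the wrap-around edge `{n, 1}` is cut at `1`): hence `a` is the minimum
of its component. The component of `T(2,1)` has a minimum `≤ T(2,1) < a`, so `a` is not the
smallest component minimum.
-/

lemma succ_mod_eq_mod_cases {n x y : ℕ} (hx : x ∈ Set.Icc 1 n) (hy : y ∈ Set.Icc 1 n)
    (h : (x + 1) % n = y % n) : y = x + 1 ∨ (x = n ∧ y = 1) := by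
  obtain ⟨hx1, hxn⟩ := hx
  obtain ⟨hy1, hyn⟩ := hy
  rcases le_or_gt (x + 1) y with hle | hlt
  · have hdvd : n ∣ y - (x + 1) := (Nat.modEq_iff_dvd' hle).mp h
    have : y - (x + 1) = 0 := Nat.eq_zero_of_dvd_of_lt hdvd (by omega)
    omega
  · have hdvd : n ∣ x + 1 - y := (Nat.modEq_iff_dvd' hlt.le).mp h.symm
    have : n ≤ x + 1 - y := Nat.le_of_dvd (by omega) hdvd
    omega

lemma cycleGraph_adj_cases {n x y : ℕ} (h : (cycleGraph n).Adj x y) :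
    y = x + 1 ∨ x = y + 1 ∨ (x = n ∧ y = 1) ∨ (x = 1 ∧ y = n) := by
  obtain ⟨hx, hy, -, hmod | hmod⟩ := h
  · rcases succ_mod_eq_mod_cases hx hy hmod with h | h
    · exact Or.inl h
    · exact Or.inr (Or.inr (Or.inl h))
  · rcases succ_mod_eq_mod_cases hy hx hmod with h | h
    · exact Or.inr (Or.inl h)
    · exact Or.inr (Or.inr (Or.inr h.symm))

lemma le_of_reachable_induce_cycleGraph {n a : ℕ} {s : Set ℕ} (h1 : 1 ∉ s) (hpred : a - 1 ∉ s)
    {u v : s} (huv : ((cycleGraph n).induce s).Reachable u v) (hu : a ≤ u) : a ≤ v := by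
  have step : ∀ x y : s, ((cycleGraph n).induce s).Adj x y → a ≤ x → a ≤ y := by
    rintro ⟨x, _⟩ ⟨y, hy⟩ hxy (hax : a ≤ x)
    change (cycleGraph n).Adj x y at hxy
    show a ≤ y
    have hy1 : 1 ≤ y := hxy.2.1.1
    rcases cycleGraph_adj_cases hxy with rfl | rfl | ⟨-, rfl⟩ | ⟨rfl, rfl⟩
    · omega
    · by_contra hya
      exact hpred (by rwa [show a - 1 = y by omega])
    · exact absurd hy h1
    · omega
  obtain ⟨w⟩ := huv
  induction w with
  | nil => exact hu
  | cons hadj _ ih => exact ih (step _ _ hadj hu)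

lemma mem_compMins_of_pred_notMem {n a : ℕ} {s : Set ℕ} (ha : a ∈ s) (h1 : 1 ∉ s)
    (hpred : a - 1 ∉ s) : a ∈ compMins n s :=
  ⟨ha, fun _ _ hab => le_of_reachable_induce_cycleGraph h1 hpred hab le_rfl⟩

lemma sInf_compMins_le {n t : ℕ} {s : Set ℕ} (ht : t ∈ s) : sInf (compMins n s) ≤ t := by
  let C : Set ℕ := {b | ∃ hb : b ∈ s, ((cycleGraph n).induce s).Reachable ⟨t, ht⟩ ⟨b, hb⟩}
  have htC : t ∈ C := ⟨ht, .rfl⟩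
  obtain ⟨hms, hreach⟩ : sInf C ∈ C := Nat.sInf_mem ⟨t, htC⟩
  have hmin : sInf C ∈ compMins n s := ⟨hms, fun b hb hr => Nat.sInf_le ⟨hb, hreach.trans hr⟩⟩
  exact (Nat.sInf_le hmin).trans (Nat.sInf_le htC)

namespace IsSYT

variable {n j : ℕ} {T : ℕ × ℕ → ℕ}

lemma apply_zero_zero_le_apply_zero (hT : IsSYT n j T) {c : ℕ} (hc : c < j) :
    T (0, 0) ≤ T (0, c) := by
  rcases Nat.eq_zero_or_pos c with rfl | hc0
  · rfl
  · exact (hT.2.2.1 (0, 0) (0, c) (Or.inl ⟨rfl, by omega⟩) (Or.inl ⟨rfl, hc⟩) rfl hc0).le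

lemma apply_zero_zero_le (hT : IsSYT n j T) (hj : 2 ≤ j) {p : ℕ × ℕ} (hp : cell n j p) :
    T (0, 0) ≤ T p := by
  obtain ⟨r, c⟩ := p
  rcases id hp with ⟨rfl, hc⟩ | ⟨rfl, hc⟩ | ⟨hr, -, rfl⟩
  · exact hT.apply_zero_zero_le_apply_zero hc
  · exact (hT.apply_zero_zero_le_apply_zero (by omega)).trans
      (hT.2.2.2 (0, c) (1, c) (Or.inl ⟨rfl, by omega⟩) hp rfl one_pos).le
  · exact (hT.2.2.2 (0, 0) (r, 0) (Or.inl ⟨rfl, by omega⟩) hp rfl (by omega)).le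

lemma apply_zero_zero (hT : IsSYT n j T) (hj : 2 ≤ j) : T (0, 0) = 1 := by
  have hmem : T (0, 0) ∈ Set.Icc 1 n := hT.2.1.1 (Or.inl ⟨rfl, by omega⟩)
  obtain ⟨p, hp, hp1⟩ := hT.2.1.2.2 ⟨le_rfl, hmem.1.trans hmem.2⟩
  have := hT.apply_zero_zero_le hj hp
  exact le_antisymm (hp1 ▸ this) hmem.1

lemma apply_notMem_image_firstRow (hT : IsSYT n j T) {p : ℕ × ℕ} (hp : cell n j p)
    (hp0 : p.1 ≠ 0) : T p ∉ T '' {q : ℕ × ℕ | q.1 = 0 ∧ q.2 < j} := by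
  rintro ⟨q, hq, hqp⟩
  exact hp0 (hT.2.1.2.1 (Or.inl hq) hp hqp ▸ hq.1)

end IsSYT

theorem stmt_4_general (n j : ℕ) (hj1 : 2 ≤ j)
    (T : ℕ × ℕ → ℕ) (hT : IsSYT n j T)
    (hrow : ∃ c < j, T (0, c) = T (1, 1) - 1)
    (W : Set ℕ) (hWdef : W = T '' {p : ℕ × ℕ | p.1 = 0 ∧ p.2 < j}) :
    1 ∈ W ∧ T (1, 1) ∉ W ∧
    T (1, 1) ∈ compMins n (Set.Icc 1 n \ W) ∧
    T (1, 1) ≠ sInf (compMins n (Set.Icc 1 n \ W)) := by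
  have cell10 : cell n j (1, 0) := Or.inr (Or.inl ⟨rfl, by omega⟩)
  have cell11 : cell n j (1, 1) := Or.inr (Or.inl ⟨rfl, by omega⟩)
  have h1W : 1 ∈ W := hWdef ▸ ⟨(0, 0), ⟨rfl, by omega⟩, hT.apply_zero_zero hj1⟩
  have hnotW {p : ℕ × ℕ} (hp : cell n j p) (hp0 : p.1 ≠ 0) : T p ∉ W :=
    hWdef ▸ hT.apply_notMem_image_firstRow hp hp0
  obtain ⟨c, hc, hTc⟩ := hrow
  have hpredW : T (1, 1) - 1 ∈ W := hWdef ▸ ⟨(0, c), ⟨rfl, hc⟩, hTc⟩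
  refine ⟨h1W, hnotW cell11 one_ne_zero, mem_compMins_of_pred_notMem
    ⟨hT.2.1.1 cell11, hnotW cell11 one_ne_zero⟩ (fun h => h.2 h1W) (fun h => h.2 hpredW), ?_⟩
  have hle : sInf (compMins n (Set.Icc 1 n \ W)) ≤ T (1, 0) :=
    sInf_compMins_le ⟨hT.2.1.1 cell10, hnotW cell10 one_ne_zero⟩
  have hlt : T (1, 0) < T (1, 1) := hT.2.2.1 (1, 0) (1, 1) cell10 cell11 rfl one_pos
  omega

/-- if the box containing `a_T - 1` lies in the first row, then
`1 ∈ W_T` (the first-row entries), `a_T ∉ W_T`, and `a_T` is a non-minimal component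
minimum of `C_n` restricted to the complement of `W_T`. -/
theorem stmt_4 (n j : ℕ) (hn : 4 ≤ n) (hj1 : 2 ≤ j) (hj2 : j ≤ n - 2)
    (T : ℕ × ℕ → ℕ) (hT : IsSYT n j T)
    (hrow : ∃ c < j, T (0, c) = T (1, 1) - 1)
    (W : Set ℕ) (hWdef : W = T '' {p : ℕ × ℕ | p.1 = 0 ∧ p.2 < j}) :
    1 ∈ W ∧ T (1, 1) ∉ W ∧
    T (1, 1) ∈ compMins n (Set.Icc 1 n \ W) ∧
    T (1, 1) ≠ sInf (compMins n (Set.Icc 1 n \ W)) :=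
  stmt_4_general n j hj1 T hT hrow W hWdef
end
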